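/- Let t ≥ 1, and for any β ∈ ℕ^n and any integer vectors v_1,…,v_t ∈ ℤ^n, one has π^{(t)}(e^β · f_{v_1}⋯f_{v_t}) = π^{(t)}(f_{v_1}⋯f_{v_t}). -/

import Mathlib

open MvPolynomial

/-- The monomial `e^a = e_1^{a_1} ⋯ e_n^{a_n}` in `K[e_1,…,e_n]`. -/
noncomputable def eMon (K : Type*) [CommSemiring K] {n : ℕ} (a : Fin n → ℕ) :
    MvPolynomial (Fin n) K :=
  ∏ i, X i ^ a i

/-- The monomial map `φ_A : K[e_1,…,e_n] → K[x_1,…,x_m]`, `e_i ↦ x^{ς_i}` where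
`ς_i` is the `i`-th column of `A`. -/
noncomputable def phiA (K : Type*) [CommSemiring K] {m n : ℕ}
    (A : Matrix (Fin m) (Fin n) ℕ) :
    MvPolynomial (Fin n) K →ₐ[K] MvPolynomial (Fin m) K :=
  aeval fun i => ∏ j, X j ^ A j i

/-- The toric ideal `I_A = ker φ_A`. -/
noncomputable def toricIdeal (K : Type*) [CommRing K] {m n : ℕ}
    (A : Matrix (Fin m) (Fin n) ℕ) : Ideal (MvPolynomial (Fin n) K) :=
  RingHom.ker (phiA K A).toRingHom

/-- The `K`-linear map `π^{(s)}` sending `e^α ↦ α ⊗ ⋯ ⊗ α` (s factors), where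
`(K^n)^{⊗ s}` is identified with functions `(Fin s → Fin n) → K`. -/
noncomputable def piMap (K : Type*) [CommSemiring K] {n : ℕ} (s : ℕ)
    (f : MvPolynomial (Fin n) K) : (Fin s → Fin n) → K :=
  fun j => ∑ α ∈ f.support, f.coeff α * ∏ i : Fin s, (α (j i) : K)

/-- `V_{A,σ}`: the `K`-span of the monomials `e^α` with `Aα = σ`. -/
noncomputable def fiberSpace (K : Type*) [CommRing K] {m n : ℕ}
    (A : Matrix (Fin m) (Fin n) ℕ) (σ : Fin m → ℕ) :
    Submodule K (MvPolynomial (Fin n) K) :=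
  Submodule.span K { f | ∃ a : Fin n → ℕ, (∀ j, ∑ i, A j i * a i = σ j) ∧ f = eMon K a }

/-- The sum `f_σ` of those terms of `f` whose monomial lies in `V_{A,σ}`. -/
noncomputable def fiberComponent {K : Type*} [CommRing K] {m n : ℕ}
    (A : Matrix (Fin m) (Fin n) ℕ) (σ : Fin m → ℕ)
    (f : MvPolynomial (Fin n) K) : MvPolynomial (Fin n) K :=
  ∑ α ∈ f.support.filter (fun α => ∀ j, ∑ i, A j i * α i = σ j),
    monomial α (f.coeff α)

/-- For a prime ideal `I`, the `t`-th symbolic power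
`I^{(t)} = { f | f·g ∈ I^t for some g ∉ I }`. -/
def symbolicPower {R : Type*} [CommRing R] (I : Ideal R) (t : ℕ) : Set R :=
  { f | ∃ g, g ∉ I ∧ f * g ∈ I ^ t }

/-- The saturation `I : x^∞ = { f | x^k f ∈ I for some k }`. -/
def satPow {R : Type*} [CommRing R] (I : Ideal R) (x : R) : Ideal R where
  carrier := { f | ∃ k : ℕ, x ^ k * f ∈ I }
  zero_mem' := ⟨0, by simp⟩
  add_mem' := by
    rintro a b ⟨k, hk⟩ ⟨l, hl⟩
    refine ⟨k + l, ?_⟩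
    have h : x ^ (k + l) * (a + b) = x ^ l * (x ^ k * a) + x ^ k * (x ^ l * b) := by
      ring
    rw [h]
    exact Ideal.add_mem _ (Ideal.mul_mem_left _ _ hk) (Ideal.mul_mem_left _ _ hl)
  smul_mem' := by
    rintro c a ⟨k, hk⟩
    refine ⟨k, ?_⟩
    have h : x ^ k * (c • a) = c * (x ^ k * a) := by
      rw [smul_eq_mul]; ring
    rw [h]
    exact Ideal.mul_mem_left _ _ hk

/-- The positive part `u^+` of an integer vector. -/
def pPart {n : ℕ} (u : Fin n → ℤ) : Fin n → ℕ := fun i => (u i).toNat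

/-- The negative part `u^-` of an integer vector. -/
def nPart {n : ℕ} (u : Fin n → ℤ) : Fin n → ℕ := fun i => (-u i).toNat

/-- The binomial `f_u = e^{u^+} - e^{u^-}`. -/
noncomputable def binom (K : Type*) [CommRing K] {n : ℕ} (u : Fin n → ℤ) :
    MvPolynomial (Fin n) K := eMon K (pPart u) - eMon K (nPart u)

/-- The lattice `ker A ⊆ ℤ^n`. -/
def matKerZ {m n : ℕ} (A : Matrix (Fin m) (Fin n) ℕ) : Set (Fin n → ℤ) :=
  { u | ∀ j, ∑ i, (A j i : ℤ) * u i = 0 }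

/-- The product of all the variables `m = e_1 ⋯ e_n`. -/
noncomputable def mProd (K : Type*) [CommSemiring K] (n : ℕ) :
    MvPolynomial (Fin n) K := ∏ i, X i

section Aux

variable {K : Type*} [CommRing K] {n : ℕ}

/-- The linear functional `f ↦ ∑ coeff α f * w α`. -/
noncomputable def wtL (K : Type*) [CommRing K] {n : ℕ} (w : (Fin n →₀ ℕ) → K) :
    MvPolynomial (Fin n) K →ₗ[K] K :=
    Finsupp.linearCombination K w ∘ₗ (AddMonoidAlgebra.coeffLinearEquiv K).toLinearMap

lemma wtL_apply (w : (Fin n →₀ ℕ) → K) (f : MvPolynomial (Fin n) K) :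
    wtL K w f = ∑ α ∈ f.support, f.coeff α * w α := by
  rw [wtL, LinearMap.comp_apply]
  erw [Finsupp.linearCombination_apply, Finsupp.sum]
  exact Finset.sum_congr rfl fun α _ => smul_eq_mul ..

lemma wtL_monomial (w : (Fin n →₀ ℕ) → K) (α : Fin n →₀ ℕ) (c : K) :
    wtL K w (monomial α c) = c * w α := by
  rw [wtL, LinearMap.comp_apply]
  change Finsupp.linearCombination K w (Finsupp.single α c) = _
  erw [Finsupp.linearCombination_single]
  rw [smul_eq_mul]

lemma wtL_shift (w : (Fin n →₀ ℕ) → K) (γ : Fin n →₀ ℕ) (f : MvPolynomial (Fin n) K) :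
    wtL K w (monomial γ 1 * f) = wtL K (fun α => w (γ + α)) f := by
  induction f using MvPolynomial.induction_on' with
  | monomial α c => rw [monomial_mul, wtL_monomial, wtL_monomial, one_mul]
  | add p q hp hq => rw [mul_add, map_add, map_add, hp, hq]

lemma monomial_one_eq (s : Fin n →₀ ℕ) :
    (monomial s 1 : MvPolynomial (Fin n) K) = ∏ i, X i ^ s i := by
  rw [monomial_eq, C_1, one_mul, Finsupp.prod]
  exact Finset.prod_subset (Finset.subset_univ _) fun i _ hi => by
    rw [Finsupp.notMem_support_iff.mp hi, pow_zero]

lemma eMon_eq_monomial (a : Fin n → ℕ) :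
    eMon K a = monomial (Finsupp.equivFunOnFinite.symm a) 1 := by
  rw [monomial_one_eq]
  exact Finset.prod_congr rfl fun i _ => rfl

lemma eMon_mul_eMon (β a : Fin n → ℕ) :
    eMon K β * eMon K a = eMon K (fun i => β i + a i) := by
  simp [eMon, pow_add, Finset.prod_mul_distrib]

lemma expand_shift {t : ℕ} (S : Finset (Fin t)) (j : Fin t → Fin n) (γ : Fin n → ℕ)
    (G : MvPolynomial (Fin n) K) :
    wtL K (fun α => ∏ i ∈ S, (α (j i) : K)) (eMon K γ * G)
      = ∑ S' ∈ S.powerset, (∏ i ∈ S', (γ (j i) : K)) *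
          wtL K (fun α => ∏ i ∈ S \ S', (α (j i) : K)) G := by
  rw [eMon_eq_monomial, wtL_shift, wtL_apply]
  have hw : ∀ α : Fin n →₀ ℕ,
      ∏ i ∈ S, (((Finsupp.equivFunOnFinite.symm γ + α) (j i) : ℕ) : K)
        = ∑ S' ∈ S.powerset, (∏ i ∈ S', (γ (j i) : K)) * ∏ i ∈ S \ S', (α (j i) : K) := by
    intro α
    rw [← Finset.prod_add]
    refine Finset.prod_congr rfl fun i _ => ?_
    push_cast [Finsupp.add_apply]
    rfl
  simp_rw [hw, Finset.mul_sum]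
  rw [Finset.sum_comm]
  refine Finset.sum_congr rfl fun S' _ => ?_
  rw [wtL_apply, Finset.mul_sum]
  refine Finset.sum_congr rfl fun α _ => by ring

lemma key_vanish {t : ℕ} (j : Fin t → Fin n) (v : Fin t → Fin n → ℤ) :
    ∀ T S : Finset (Fin t), S.card < T.card → ∀ β : Fin n → ℕ,
      wtL K (fun α => ∏ i ∈ S, (α (j i) : K)) (eMon K β * ∏ i ∈ T, binom K (v i)) = 0 := by
  intro T
  induction T using Finset.strongInduction with
  | _ T ih =>
    intro S hcard β
    obtain ⟨i₀, hi₀⟩ : T.Nonempty :=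
      Finset.card_pos.mp (lt_of_le_of_lt (Nat.zero_le _) hcard)
    rw [← Finset.prod_erase_mul T _ hi₀]
    set G := ∏ i ∈ T.erase i₀, binom K (v i) with hG
    have hexp : eMon K β * (G * binom K (v i₀))
        = eMon K (fun i => β i + pPart (v i₀) i) * G
          - eMon K (fun i => β i + nPart (v i₀) i) * G := by
      rw [← eMon_mul_eMon, ← eMon_mul_eMon, binom]
      ring
    rw [hexp, map_sub, expand_shift, expand_shift, ← Finset.sum_sub_distrib]
    refine Finset.sum_eq_zero fun S' hS' => ?_
    rcases S'.eq_empty_or_nonempty with h | h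
    · subst h; simp
    · have hz : wtL K (fun α => ∏ i ∈ S \ S', (α (j i) : K)) G = 0 := by
        have hc : (S \ S').card < (T.erase i₀).card := by
          have h1 : S'.card ≤ S.card := Finset.card_le_card (Finset.mem_powerset.mp hS')
          have h2 : 1 ≤ S'.card := Finset.card_pos.mpr h
          have h3 : (S \ S').card = S.card - S'.card :=
            Finset.card_sdiff_of_subset (Finset.mem_powerset.mp hS')
          have h4 : (T.erase i₀).card = T.card - 1 := Finset.card_erase_of_mem hi₀
          have h5 : 1 ≤ T.card := Finset.card_pos.mpr ⟨i₀, hi₀⟩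
          omega
        have := ih (T.erase i₀) (Finset.erase_ssubset hi₀) (S \ S') hc (fun _ => 0)
        simpa [eMon] using this
      rw [hz, mul_zero, mul_zero, sub_zero]

end Aux

/-- For `t ≥ 1`, any `β ∈ ℕ^n` and any `v_1,…,v_t ∈ ℤ^n`:
`π^{(t)}(e^β·f_{v_1}⋯f_{v_t}) = π^{(t)}(f_{v_1}⋯f_{v_t})`. -/
theorem piMap_eMon_mul_prod_binom
    {K : Type*} [Field K] [IsAlgClosed K] [CharZero K]
    {n : ℕ} (t : ℕ) (ht : 1 ≤ t)
    (β : Fin n → ℕ) (v : Fin t → Fin n → ℤ) :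
    piMap K t (eMon K β * ∏ i, binom K (v i)) = piMap K t (∏ i, binom K (v i)) := by
  funext j
  have hpi : ∀ f : MvPolynomial (Fin n) K,
      piMap K t f j = wtL K (fun α => ∏ i ∈ Finset.univ, (α (j i) : K)) f := by
    intro f; rw [wtL_apply]; rfl
  rw [hpi, hpi]
  rw [expand_shift]
  rw [Finset.sum_eq_single (∅ : Finset (Fin t))]
  · simp
  · intro S' hS' hne
    have h : S'.Nonempty := Finset.nonempty_iff_ne_empty.mpr hne
    have hz : wtL K (fun α => ∏ i ∈ Finset.univ \ S', (α (j i) : K))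
        (∏ i, binom K (v i)) = 0 := by
      have hc : (Finset.univ \ S').card < (Finset.univ : Finset (Fin t)).card := by
        have h1 : S'.card ≤ (Finset.univ : Finset (Fin t)).card :=
          Finset.card_le_card (Finset.subset_univ _)
        have h2 : 1 ≤ S'.card := Finset.card_pos.mpr h
        have h3 : (Finset.univ \ S').card = (Finset.univ : Finset (Fin t)).card - S'.card :=
          Finset.card_sdiff_of_subset (Finset.subset_univ _)
        omega
      have := key_vanish (K := K) j v Finset.univ (Finset.univ \ S') hc (fun _ => 0)
      simpa [eMon] using this
    rw [hz, mul_zero]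
  · intro hmem
    exact absurd (Finset.empty_mem_powerset _) hmem
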